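/- Let (X,d) be a metric space, P a finite nonempty set of points of X, and k an integer with 1 ≤ k ≤ |P|. If S ⊆ P is a set of points such that d(s,s') > NR(s) + NR(s') for all distinct s, s' ∈ S, then the closed balls B_{NR(s)}(s) for s ∈ S are pairwise disjoint, each such ball contains at least |P|/k points of P, and consequently |S| ≤ k. -/
import Mathlib


/-- The neighborhood radius of `x` with respect to population `P` and parameter `k`:
the minimum radius `r ≥ 0` such that the closed ball of radius `r` around `x`
contains at least `|P|/k` points of `P`. -/
noncomputable def NR {X : Type*} [MetricSpace X] (P : Finset X) (k : ℕ) (x : X) : ℝ :=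
  sInf {r : ℝ | 0 ≤ r ∧ (P.card : ℝ) / (k : ℝ) ≤ ((P.filter fun p => dist x p ≤ r).card : ℝ)}

lemma NR_mem {X : Type*} [MetricSpace X] (P : Finset X) (hP : P.Nonempty) (k : ℕ)
    (hk1 : 1 ≤ k) (x : X) :
    0 ≤ NR P k x ∧
      (P.card : ℝ) / (k : ℝ) ≤ ((P.filter fun p => dist x p ≤ NR P k x).card : ℝ) := by
  classical
  set A : Set ℝ :=
    {r : ℝ | 0 ≤ r ∧ (P.card : ℝ) / (k : ℝ) ≤ ((P.filter fun p => dist x p ≤ r).card : ℝ)}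
    with hA
  have hbdd : BddBelow A := ⟨0, fun r hr => hr.1⟩
  -- a big radius is in A
  have himg : (P.image (dist x)).Nonempty := hP.image _
  set R := (P.image (dist x)).max' himg with hR
  have hRmem : R ∈ P.image (dist x) := (P.image (dist x)).max'_mem himg
  have hR0 : 0 ≤ R := by
    obtain ⟨p, _, hp⟩ := Finset.mem_image.1 hRmem
    rw [← hp]; exact dist_nonneg
  have hRA : R ∈ A := by
    refine ⟨hR0, ?_⟩
    have hfilt : P.filter (fun p => dist x p ≤ R) = P := by
      apply Finset.filter_true_of_mem
      intro p hp
      exact Finset.le_max' _ _ (Finset.mem_image_of_mem _ hp)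
    rw [hfilt]
    apply div_le_self (by positivity)
    exact_mod_cast hk1
  -- the finite candidate set
  set D : Finset ℝ := insert 0 (P.image (dist x)) with hD
  set A' : Finset ℝ := D.filter (· ∈ A) with hA'
  have hA'ne : A'.Nonempty := ⟨R, by simp [hA', hD, hRA, hRmem]⟩
  -- every element of A dominates an element of A'
  have hdom : ∀ r ∈ A, ∃ d ∈ A', d ≤ r := by
    intro r hr
    set T : Finset ℝ := D.filter (· ≤ r) with hT
    have hTne : T.Nonempty := ⟨0, by simp [hT, hD, hr.1]⟩
    set d := T.max' hTne with hd
    have hdT : d ∈ T := T.max'_mem hTne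
    have hdr : d ≤ r := (Finset.mem_filter.1 hdT).2
    have hdD : d ∈ D := (Finset.mem_filter.1 hdT).1
    have hd0 : 0 ≤ d := Finset.le_max' _ _ (by simp [hT, hD, hr.1])
    have hsub : P.filter (fun p => dist x p ≤ r) ⊆ P.filter (fun p => dist x p ≤ d) := by
      intro p hp
      rw [Finset.mem_filter] at hp ⊢
      refine ⟨hp.1, ?_⟩
      apply Finset.le_max'
      simp only [hT, Finset.mem_filter]
      exact ⟨by simp [hD, Finset.mem_image_of_mem _ hp.1], hp.2⟩
    have hdA : d ∈ A := by
      refine ⟨hd0, le_trans hr.2 ?_⟩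
      exact_mod_cast Finset.card_le_card hsub
    exact ⟨d, Finset.mem_filter.2 ⟨hdD, hdA⟩, hdr⟩
  -- sInf A = min' A' ∈ A
  have hmemA' : A'.min' hA'ne ∈ A := (Finset.mem_filter.1 (A'.min'_mem hA'ne)).2
  have hinf : sInf A = A'.min' hA'ne := by
    apply le_antisymm (csInf_le hbdd hmemA')
    apply le_csInf ⟨R, hRA⟩
    intro r hr
    obtain ⟨d, hd, hdr⟩ := hdom r hr
    exact le_trans (Finset.min'_le _ _ hd) hdr
  have : NR P k x ∈ A := by
    rw [NR, ← hA, hinf]; exact hmemA'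
  exact this

/-- If the centers in `S` are pairwise separated by more than the sums of their
neighborhood radii, then the closed balls `B_{NR(s)}(s)` are pairwise disjoint, each
contains at least `|P|/k` points of `P`, and consequently `|S| ≤ k`. -/
theorem separated_centers_balls_disjoint_and_card_le {X : Type*} [MetricSpace X]
    (P : Finset X) (hP : P.Nonempty) (k : ℕ) (hk1 : 1 ≤ k) (hk2 : k ≤ P.card)
    (S : Finset X) (hSP : S ⊆ P)
    (hsep : ∀ s ∈ S, ∀ s' ∈ S, s ≠ s' → NR P k s + NR P k s' < dist s s') :
    ((S : Set X).Pairwise fun s s' =>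
        Disjoint (Metric.closedBall s (NR P k s)) (Metric.closedBall s' (NR P k s'))) ∧
    (∀ s ∈ S, (P.card : ℝ) / (k : ℝ) ≤ ((P.filter fun p => dist s p ≤ NR P k s).card : ℝ)) ∧
    S.card ≤ k := by
  classical
  have hmem := fun x => NR_mem P hP k hk1 x
  have hdisj : (S : Set X).Pairwise fun s s' =>
      Disjoint (Metric.closedBall s (NR P k s)) (Metric.closedBall s' (NR P k s')) := by
    intro s hs s' hs' hne
    rw [Set.disjoint_left]
    intro y hy hy'
    rw [Metric.mem_closedBall] at hy hy'
    have := hsep s hs s' hs' hne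
    have htri : dist s s' ≤ dist s y + dist y s' := dist_triangle s y s'
    have hc : dist s y = dist y s := dist_comm s y
    linarith
  have hcount : ∀ s ∈ S,
      (P.card : ℝ) / (k : ℝ) ≤ ((P.filter fun p => dist s p ≤ NR P k s).card : ℝ) :=
    fun s _ => (hmem s).2
  refine ⟨hdisj, hcount, ?_⟩
  set F : X → Finset X := fun s => P.filter (fun p => dist s p ≤ NR P k s) with hF
  have hFdisj : ∀ s ∈ S, ∀ s' ∈ S, s ≠ s' → Disjoint (F s) (F s') := by
    intro s hs s' hs' hne
    rw [Finset.disjoint_left]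
    intro p hp hp'
    rw [hF, Finset.mem_filter] at hp hp'
    have hd := hdisj hs hs' hne
    simp only [Set.disjoint_left] at hd
    exact hd (Metric.mem_closedBall'.2 hp.2) (Metric.mem_closedBall'.2 hp'.2)
  have hsum : ∑ s ∈ S, ((F s).card : ℝ) ≤ (P.card : ℝ) := by
    have h1 : ∑ s ∈ S, (F s).card = (S.biUnion F).card :=
      (Finset.card_biUnion hFdisj).symm
    have h2 : S.biUnion F ⊆ P := by
      intro p hp
      obtain ⟨s, _, hps⟩ := Finset.mem_biUnion.1 hp
      exact (Finset.mem_filter.1 hps).1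
    have h3 : (S.biUnion F).card ≤ P.card := Finset.card_le_card h2
    rw [← h1] at h3
    exact_mod_cast h3
  have hlow : (S.card : ℝ) * ((P.card : ℝ) / (k : ℝ)) ≤ ∑ s ∈ S, ((F s).card : ℝ) := by
    calc (S.card : ℝ) * ((P.card : ℝ) / (k : ℝ))
        = ∑ _s ∈ S, ((P.card : ℝ) / (k : ℝ)) := by
          rw [Finset.sum_const, nsmul_eq_mul]
      _ ≤ ∑ s ∈ S, ((F s).card : ℝ) := Finset.sum_le_sum (fun s hs => hcount s hs)
  have hPpos : (0 : ℝ) < P.card := by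
    exact_mod_cast hP.card_pos
  have hkpos : (0 : ℝ) < k := by exact_mod_cast hk1
  have : (S.card : ℝ) ≤ (k : ℝ) := by
    have h := le_trans hlow hsum
    rw [← mul_div_assoc, div_le_iff₀ hkpos] at h
    exact le_of_mul_le_mul_right (by linarith) hPpos
  exact_mod_cast this
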